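/- Let G=(V,E,w) be an edge-weighted graph with E≠∅ and let d be a positive real with d(V) ≥ d; set r = ⌈d/w_max⌉. Among all subsets S ⊆ V satisfying |S| ≥ r and w(S) > d(V)·(|S| − r/2), let S be one of minimum cardinality. Then the induced subgraph G[S] is (⌊r/2⌋ + 1)-vertex-connected. -/

import Mathlib

/-!
Write `n = |S|`, `ρ = d(V)` and `c = w_max`, so that `c (r - 1) < d ≤ ρ`. Since
`2 w(S) ≤ n (n - 1) c`, a set with `w(S) > ρ (n - r/2)` and `n ≥ r` has `n ≥ r + 1`.
If deleting `D` with `2 |D| ≤ r` disconnects `G[S]`, then `S = P ∪ Q` with `P ∩ Q = D` and no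
edges between `P \ Q` and `Q \ P`; each case gives `w(S) ≤ ρ (n - r/2)`:
* `|P|, |Q| ≥ r`: minimality bounds `w(P)` and `w(Q)`, and
  `w(S) ≤ w(P) + w(Q) ≤ ρ (n + |D| - r)`;
* `|P| ≥ r ≥ |Q|`: the vertices of `Q \ P` have weighted degree at most `(r - 1) c < ρ`, so
  `w(S) < ρ |Q \ P| + w(P)`, and minimality bounds `w(P)`;
* `|P|, |Q| < r`: both `P \ Q` and `Q \ P` have at least `m = n - r + 1` vertices and no pair
  between them is an edge, so `2 w(S) ≤ (n (n - 1) - 2 m²) c ≤ (r - 1) (2 n - r) c`.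
-/

open Finset
open scoped Classical

noncomputable section

variable {V : Type*} [Fintype V] [DecidableEq V]

/-- The set of edges of `G` with both endpoints in `S`, i.e. the edge set `E(S)`
of the induced subgraph `G[S]`. -/
def edgesIn (G : SimpleGraph V) (S : Finset V) : Finset (Sym2 V) :=
  Finset.univ.filter (fun e => e ∈ G.edgeSet ∧ ∀ v ∈ e, v ∈ S)

/-- `w(S)`: the total weight of the edges of the induced subgraph `G[S]`. -/
def wsum (G : SimpleGraph V) (w : Sym2 V → ℝ) (S : Finset V) : ℝ :=
  ∑ e ∈ edgesIn G S, w e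

/-- The density `d(S) = w(S)/|S|` of the induced subgraph `G[S]`. -/
def density (G : SimpleGraph V) (w : Sym2 V → ℝ) (S : Finset V) : ℝ :=
  wsum G w S / S.card

/-- The weighted degree of a vertex `v` in the induced subgraph `G[S]`. -/
def wdeg (G : SimpleGraph V) (w : Sym2 V → ℝ) (S : Finset V) (v : V) : ℝ :=
  ∑ e ∈ (edgesIn G S).filter (fun e => v ∈ e), w e

/-- `G[S]` is `k`-vertex-connected: it has at least `k+1` vertices, and deleting any set
of fewer than `k` vertices leaves a connected graph. -/
def VertexConnected (G : SimpleGraph V) (S : Finset V) (k : ℕ) : Prop :=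
  k + 1 ≤ S.card ∧ ∀ D : Finset V, D ⊆ S → D.card < k →
    (G.induce ((S \ D : Finset V) : Set V)).Connected

/-- The edge-weighted graph `G[S]` is `k`-edge-connected: it is connected, and every set `F`
of its edges whose removal disconnects it has total weight at least `k`. -/
def EdgeConnected (G : SimpleGraph V) (w : Sym2 V → ℝ) (S : Finset V) (k : ℝ) : Prop :=
  (G.induce (S : Set V)).Connected ∧
  ∀ F : Finset (Sym2 V), F ⊆ edgesIn G S →
    ¬ ((G.deleteEdges (F : Set (Sym2 V))).induce (S : Set V)).Connected →
    k ≤ ∑ e ∈ F, w e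

lemma mul_natCeil_div_sub_one_lt {c x : ℝ} (hc : 0 < c) (hx : 0 ≤ x) :
    c * (⌈x / c⌉₊ - 1) < x :=
  calc c * (⌈x / c⌉₊ - 1) < c * (x / c) := by
        gcongr
        linarith [Nat.ceil_lt_add_one (div_nonneg hx hc.le)]
    _ = x := mul_div_cancel₀ x hc.ne'

section WeightedGraph

variable {G : SimpleGraph V} {w : Sym2 V → ℝ} {S T U : Finset V} {c : ℝ}

lemma mem_edgesIn {e : Sym2 V} :
    e ∈ edgesIn G S ↔ e ∈ G.edgeSet ∧ ∀ v ∈ e, v ∈ S := by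
  simp [edgesIn]

lemma edgesIn_mono (h : S ⊆ T) : edgesIn G S ⊆ edgesIn G T := fun _ he =>
  mem_edgesIn.2 ⟨(mem_edgesIn.1 he).1, fun v hv => h ((mem_edgesIn.1 he).2 v hv)⟩

lemma sum_wdeg_eq_sum_card_mul (X : Finset V) :
    ∑ v ∈ X, wdeg G w S v = ∑ e ∈ edgesIn G S, (#{v ∈ X | v ∈ e} : ℝ) * w e := by
  simp_rw [wdeg, sum_filter]
  rw [sum_comm]
  refine sum_congr rfl fun e _ => ?_
  rw [← sum_filter, sum_const, nsmul_eq_mul]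

lemma card_filter_mem_of_mem_edgesIn {e : Sym2 V} (he : e ∈ edgesIn G S) :
    #{v ∈ S | v ∈ e} = 2 := by
  have hsub : e.toFinset ⊆ S := fun v hv => (mem_edgesIn.1 he).2 v (Sym2.mem_toFinset.1 hv)
  rw [← Sym2.card_toFinset_of_not_isDiag e (G.not_isDiag_of_mem_edgeSet (mem_edgesIn.1 he).1)]
  congr 1
  ext v
  simp only [mem_filter, Sym2.mem_toFinset]
  exact ⟨And.right, fun hv => ⟨hsub (Sym2.mem_toFinset.2 hv), hv⟩⟩

lemma two_mul_wsum_eq_sum_wdeg : 2 * wsum G w S = ∑ v ∈ S, wdeg G w S v := by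
  rw [sum_wdeg_eq_sum_card_mul, wsum, mul_sum]
  refine sum_congr rfl fun e he => ?_
  rw [card_filter_mem_of_mem_edgesIn he]
  norm_num

lemma wdeg_le (hc0 : 0 ≤ c) (hc : ∀ e ∈ edgesIn G S, w e ≤ c) {v : V} (hv : v ∈ U)
    (hU : ∀ u ∈ S, G.Adj v u → u ∈ U) : wdeg G w S v ≤ (#U - 1) * c := by
  have hsub : {e ∈ edgesIn G S | v ∈ e} ⊆ (U.erase v).image (fun u => s(v, u)) := by
    intro e he
    obtain ⟨he, hve⟩ := mem_filter.1 he
    have hadj : G.Adj v (Sym2.Mem.other hve) := by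
      rw [← SimpleGraph.mem_edgeSet, Sym2.other_spec hve]
      exact (mem_edgesIn.1 he).1
    have hS : Sym2.Mem.other hve ∈ S := (mem_edgesIn.1 he).2 _ (Sym2.other_mem hve)
    exact mem_image.2 ⟨_, mem_erase.2 ⟨hadj.ne.symm, hU _ hS hadj⟩, Sym2.other_spec hve⟩
  have hcard : (#{e ∈ edgesIn G S | v ∈ e} : ℝ) ≤ #U - 1 := by
    rw [← cast_card_erase_of_mem hv]
    exact_mod_cast (card_le_card hsub).trans card_image_le
  calc wdeg G w S v ≤ #{e ∈ edgesIn G S | v ∈ e} * c := by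
        rw [← nsmul_eq_mul]
        exact sum_le_card_nsmul _ _ _ fun e he => hc e (mem_filter.1 he).1
    _ ≤ (#U - 1) * c := by gcongr

lemma two_mul_wsum_le (hc0 : 0 ≤ c) (hc : ∀ e ∈ edgesIn G S, w e ≤ c) :
    2 * wsum G w S ≤ #S * (#S - 1) * c := by
  rw [two_mul_wsum_eq_sum_wdeg, mul_assoc, ← nsmul_eq_mul]
  exact sum_le_card_nsmul _ _ _ fun v hv => wdeg_le hc0 hc hv fun u hu _ => hu

lemma wsum_le_sum_wdeg_add_wsum_sdiff (hw : ∀ e ∈ G.edgeSet, 0 ≤ w e) (X : Finset V) :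
    wsum G w S ≤ ∑ v ∈ X, wdeg G w S v + wsum G w (S \ X) := by
  rw [wsum, ← sum_filter_add_sum_filter_not (edgesIn G S) (fun e => ∃ v ∈ e, v ∈ X)]
  gcongr ?_ + ?_
  · rw [sum_wdeg_eq_sum_card_mul, sum_filter]
    refine sum_le_sum fun e he => ?_
    split_ifs with hX
    · obtain ⟨v, hve, hvX⟩ := hX
      have : (1 : ℝ) ≤ #{v ∈ X | v ∈ e} := by
        exact_mod_cast card_pos.2 ⟨v, mem_filter.2 ⟨hvX, hve⟩⟩
      nlinarith [hw e (mem_edgesIn.1 he).1]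
    · exact mul_nonneg (Nat.cast_nonneg _) (hw e (mem_edgesIn.1 he).1)
  · refine sum_le_sum_of_subset_of_nonneg (fun e he => ?_)
      fun e he _ => hw e (mem_edgesIn.1 he).1
    obtain ⟨he, hX⟩ := mem_filter.1 he
    simp only [not_exists, not_and] at hX
    exact mem_edgesIn.2 ⟨(mem_edgesIn.1 he).1,
      fun v hv => mem_sdiff.2 ⟨(mem_edgesIn.1 he).2 v hv, hX v hv⟩⟩

end WeightedGraph

structure IsSeparation {α : Type*} [DecidableEq α] (G : SimpleGraph α) (S P Q : Finset α) :
    Prop where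
  union_eq : P ∪ Q = S
  not_adj : ∀ x ∈ P \ Q, ∀ y ∈ Q \ P, ¬ G.Adj x y

namespace IsSeparation

variable {α : Type*} [DecidableEq α] {G : SimpleGraph α} {S P Q : Finset α}

lemma symm (h : IsSeparation G S P Q) : IsSeparation G S Q P :=
  ⟨union_comm Q P ▸ h.union_eq, fun x hx y hy hxy => h.not_adj y hy x hx hxy.symm⟩

lemma mem_of_adj (h : IsSeparation G S P Q) {u v : α} (hv : v ∈ P \ Q) (hu : u ∈ S)
    (hadj : G.Adj v u) : u ∈ P := by
  by_contra huP
  have huQ : u ∈ Q := by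
    rw [← h.union_eq] at hu
    exact (mem_union.1 hu).resolve_left huP
  exact h.not_adj v hv u (mem_sdiff.2 ⟨huQ, huP⟩) hadj

lemma mem_or_mem_of_adj (h : IsSeparation G S P Q) {x y : α} (hx : x ∈ S) (hy : y ∈ S)
    (hadj : G.Adj x y) : (x ∈ P ∧ y ∈ P) ∨ (x ∈ Q ∧ y ∈ Q) := by
  have hx' := h.not_adj x
  have hy' := h.not_adj y
  have hadj' := hadj.symm
  rw [← h.union_eq, mem_union] at hx hy
  simp only [mem_sdiff] at hx' hy'
  tauto

lemma card_eq (h : IsSeparation G S P Q) : #S = #(Q \ P) + #P := by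
  rw [card_sdiff_add_card, union_comm, h.union_eq]

lemma sdiff_sdiff_eq (h : IsSeparation G S P Q) : S \ (Q \ P) = P := by
  ext v
  rw [← h.union_eq]
  simp only [mem_sdiff, mem_union]
  tauto

end IsSeparation

section Separation

variable {α : Type*} [DecidableEq α] {G : SimpleGraph α}

lemma exists_subset_not_adj_of_not_connected {W : Finset α} (hW : W.Nonempty)
    (h : ¬ (G.induce (W : Set α)).Connected) :
    ∃ A ⊆ W, A.Nonempty ∧ (W \ A).Nonempty ∧
      ∀ x ∈ A, ∀ y ∈ W \ A, ¬ G.Adj x y := by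
  have : Nonempty (W : Set α) := hW.coe_sort
  obtain ⟨a, b, hab⟩ : ∃ a b, ¬ (G.induce (W : Set α)).Reachable a b := by
    simpa [SimpleGraph.connected_iff, SimpleGraph.Preconnected] using h
  let A := {v ∈ W | ∃ hv : v ∈ (W : Set α), (G.induce (W : Set α)).Reachable a ⟨v, hv⟩}
  refine ⟨A, filter_subset _ _, ⟨a, mem_filter.2 ⟨a.2, a.2, .rfl⟩⟩,
    ⟨b, mem_sdiff.2 ⟨b.2, fun hb => hab ?_⟩⟩, fun x hx y hy hxy => ?_⟩
  · obtain ⟨_, _, hb⟩ := mem_filter.1 hb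
    exact hb
  · obtain ⟨hyW, hyA⟩ := mem_sdiff.1 hy
    obtain ⟨_, hxW, hx⟩ := mem_filter.1 hx
    refine hyA (mem_filter.2 ⟨hyW, hyW, hx.trans ?_⟩)
    exact (show (G.induce (W : Set α)).Adj ⟨x, hxW⟩ ⟨y, hyW⟩ from hxy).reachable

lemma exists_isSeparation_of_not_connected {S D : Finset α} (hD : D ⊆ S)
    (hne : (S \ D).Nonempty) (h : ¬ (G.induce ((S \ D : Finset α) : Set α)).Connected) :
    ∃ P Q, IsSeparation G S P Q ∧ P ∩ Q = D ∧ (P \ Q).Nonempty ∧ (Q \ P).Nonempty := by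
  obtain ⟨A, hAW, ⟨a, ha⟩, ⟨b, hb⟩, hA⟩ := exists_subset_not_adj_of_not_connected hne h
  have hA' : ∀ v ∈ A, v ∈ S ∧ v ∉ D := fun v hv => mem_sdiff.1 (hAW hv)
  refine ⟨A ∪ D, (S \ D) \ A ∪ D, ⟨?_, fun x hx y hy => hA x ?_ y ?_⟩, ?_,
    ⟨a, ?_⟩, ⟨b, ?_⟩⟩
  · ext v
    have := hA' v
    have := @hD v
    simp only [mem_union, mem_sdiff]
    tauto
  · have := hA' x
    simp only [mem_union, mem_sdiff] at hx
    tauto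
  · simp only [mem_union, mem_sdiff] at hy ⊢
    tauto
  · ext v
    have := hA' v
    simp only [mem_union, mem_sdiff, mem_inter]
    tauto
  · have := hA' a ha
    simp only [mem_union, mem_sdiff]
    tauto
  · simp only [mem_union, mem_sdiff] at hb ⊢
    tauto

end Separation

namespace IsSeparation

variable {G : SimpleGraph V} {w : Sym2 V → ℝ} {S P Q : Finset V} {c : ℝ}

lemma edgesIn_subset (h : IsSeparation G S P Q) :
    edgesIn G S ⊆ edgesIn G P ∪ edgesIn G Q := by
  intro e he
  induction e using Sym2.ind with
  | _ x y =>
    obtain ⟨hxy, hS⟩ := mem_edgesIn.1 he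
    simp only [mem_union, mem_edgesIn, Sym2.mem_iff, forall_eq_or_imp, forall_eq]
    rcases h.mem_or_mem_of_adj (hS x (Sym2.mem_mk_left x y)) (hS y (Sym2.mem_mk_right x y)) hxy
      with hP | hQ
    · exact Or.inl ⟨hxy, hP⟩
    · exact Or.inr ⟨hxy, hQ⟩

lemma wsum_le_add (h : IsSeparation G S P Q) (hw : ∀ e ∈ G.edgeSet, 0 ≤ w e) :
    wsum G w S ≤ wsum G w P + wsum G w Q := by
  have hinter : 0 ≤ ∑ e ∈ edgesIn G P ∩ edgesIn G Q, w e :=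
    sum_nonneg fun e he => hw e (mem_edgesIn.1 (mem_inter.1 he).1).1
  calc wsum G w S ≤ ∑ e ∈ edgesIn G P ∪ edgesIn G Q, w e :=
        sum_le_sum_of_subset_of_nonneg h.edgesIn_subset fun e he _ =>
          (mem_union.1 he).elim (fun he => hw e (mem_edgesIn.1 he).1)
            (fun he => hw e (mem_edgesIn.1 he).1)
    _ ≤ wsum G w P + wsum G w Q := by
        rw [wsum, wsum, ← sum_union_inter]
        linarith

lemma wsum_le_mul_add_wsum (h : IsSeparation G S P Q) (hw : ∀ e ∈ G.edgeSet, 0 ≤ w e)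
    (hc0 : 0 ≤ c) (hc : ∀ e ∈ edgesIn G S, w e ≤ c) :
    wsum G w S ≤ #(Q \ P) * (#Q - 1) * c + wsum G w P := by
  have hdeg : ∀ v ∈ Q \ P, wdeg G w S v ≤ (#Q - 1) * c := fun v hv =>
    wdeg_le hc0 hc (mem_sdiff.1 hv).1 fun _ hu hadj => h.symm.mem_of_adj hv hu hadj
  calc wsum G w S ≤ ∑ v ∈ Q \ P, wdeg G w S v + wsum G w (S \ (Q \ P)) :=
        wsum_le_sum_wdeg_add_wsum_sdiff hw _
    _ ≤ #(Q \ P) * (#Q - 1) * c + wsum G w P := by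
        rw [h.sdiff_sdiff_eq, mul_assoc, ← nsmul_eq_mul]
        gcongr
        exact sum_le_card_nsmul _ _ _ hdeg

lemma two_mul_wsum_le (h : IsSeparation G S P Q) (hc0 : 0 ≤ c)
    (hc : ∀ e ∈ edgesIn G S, w e ≤ c) :
    2 * wsum G w S ≤ (#S * (#S - 1) - 2 * #(P \ Q) * #(Q \ P)) * c := by
  have hdeg {X U : Finset V} (hXU : ∀ v ∈ X, v ∈ U ∧ ∀ u ∈ S, G.Adj v u → u ∈ U) :
      ∑ v ∈ X, wdeg G w S v ≤ #X * ((#U - 1) * c) := by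
    rw [← nsmul_eq_mul]
    exact sum_le_card_nsmul _ _ _ fun v hv => wdeg_le hc0 hc (hXU v hv).1 (hXU v hv).2
  have hdegPQ := hdeg (X := P \ Q) (U := P) fun v hv => ⟨(mem_sdiff.1 hv).1,
    fun _ hu hadj => h.mem_of_adj hv hu hadj⟩
  have hdegQP := hdeg (X := Q \ P) (U := Q) fun v hv => ⟨(mem_sdiff.1 hv).1,
    fun _ hu hadj => h.symm.mem_of_adj hv hu hadj⟩
  have hdegPiQ := hdeg (X := P ∩ Q) (U := S) fun v hv =>
    ⟨h.union_eq ▸ mem_union_left _ (mem_inter.1 hv).1, fun _ hu _ => hu⟩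
  have hsplit (f : V → ℝ) :
      ∑ v ∈ S, f v =
        ∑ v ∈ Q \ P, f v + (∑ v ∈ P \ Q, f v + ∑ v ∈ P ∩ Q, f v) := by
    rw [← h.union_eq, union_comm, ← sdiff_union_self_eq_union, sum_union sdiff_disjoint,
      ← sum_inter_add_sum_sdiff P Q f, add_comm (∑ v ∈ P ∩ Q, f v)]
  have hS : (#S : ℝ) = #(Q \ P) + (#(P \ Q) + #(P ∩ Q)) := by
    rw [h.card_eq, ← card_sdiff_add_card_inter P Q]; push_cast; ring
  have hP : (#P : ℝ) = #(P \ Q) + #(P ∩ Q) := by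
    exact_mod_cast (card_sdiff_add_card_inter P Q).symm
  have hQ : (#Q : ℝ) = #(Q \ P) + #(P ∩ Q) := by
    rw [inter_comm]; exact_mod_cast (card_sdiff_add_card_inter Q P).symm
  rw [two_mul_wsum_eq_sum_wdeg, hsplit]
  calc _ ≤ #(Q \ P) * ((#Q - 1) * c)
        + (#(P \ Q) * ((#P - 1) * c) + #(P ∩ Q) * ((#S - 1) * c)) := by gcongr
    _ = _ := by rw [hS, hP, hQ]; ring

end IsSeparation


/-- The sets of the theorem, with `ρ` in the role of `d(V)`. -/
def IsHeavy (G : SimpleGraph V) (w : Sym2 V → ℝ) (ρ : ℝ) (r : ℕ) (T : Finset V) : Prop :=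
  r ≤ #T ∧ ρ * ((#T : ℝ) - r / 2) < wsum G w T

def IsMinHeavy (G : SimpleGraph V) (w : Sym2 V → ℝ) (ρ : ℝ) (r : ℕ) (S : Finset V) :
    Prop :=
  IsHeavy G w ρ r S ∧ ∀ T, IsHeavy G w ρ r T → #S ≤ #T

section Heavy

variable {G : SimpleGraph V} {w : Sym2 V → ℝ} {ρ c : ℝ} {r : ℕ} {S P Q : Finset V}

lemma IsHeavy.succ_le_card (hS : IsHeavy G w ρ r S) (hc0 : 0 ≤ c)
    (hc : ∀ e ∈ edgesIn G S, w e ≤ c) (hρ : c * (r - 1) < ρ) : r + 1 ≤ #S := by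
  obtain ⟨hrS, hwS⟩ := hS
  refine lt_of_le_of_ne hrS fun hr => ?_
  have hcomplete := two_mul_wsum_le (w := w) hc0 hc
  rw [← hr] at hcomplete hwS
  nlinarith [mul_nonneg (Nat.cast_nonneg (α := ℝ) r) (sub_pos.2 hρ).le]

lemma IsMinHeavy.wsum_le (hS : IsMinHeavy G w ρ r S) {T : Finset V} (hT : #T < #S)
    (hr : r ≤ #T) : wsum G w T ≤ ρ * (#T - r / 2) :=
  le_of_not_gt fun h => hT.not_ge (hS.2 T ⟨hr, h⟩)

lemma IsMinHeavy.not_isSeparation_of_le_card (hS : IsMinHeavy G w ρ r S)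
    (hw : ∀ e ∈ G.edgeSet, 0 ≤ w e) (hρ : 0 ≤ ρ) (h : IsSeparation G S P Q)
    (hk : 2 * #(P ∩ Q) ≤ r) (hP : (P \ Q).Nonempty) (hQ : (Q \ P).Nonempty)
    (hrP : r ≤ #P) (hrQ : r ≤ #Q) : False := by
  have hPS : #P < #S := by rw [h.card_eq]; have := hQ.card_pos; omega
  have hQS : #Q < #S := by rw [h.symm.card_eq]; have := hP.card_pos; omega
  have hcard : (#P : ℝ) + #Q = #S + #(P ∩ Q) := by
    rw [← h.union_eq]; exact_mod_cast (card_union_add_card_inter P Q).symm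
  have hk' : (2 * #(P ∩ Q) : ℝ) ≤ r := by exact_mod_cast hk
  have hsplit := h.wsum_le_add hw
  have hwP := hS.wsum_le hPS hrP
  have hwQ := hS.wsum_le hQS hrQ
  nlinarith [hS.1.2, mul_nonneg hρ (by linarith : (0 : ℝ) ≤ r / 2 - #(P ∩ Q))]

lemma IsMinHeavy.not_isSeparation_of_le_card_of_card_le (hS : IsMinHeavy G w ρ r S)
    (hw : ∀ e ∈ G.edgeSet, 0 ≤ w e) (hc0 : 0 ≤ c) (hc : ∀ e ∈ edgesIn G S, w e ≤ c)
    (hρ : c * (r - 1) < ρ) (h : IsSeparation G S P Q) (hQ : (Q \ P).Nonempty)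
    (hrP : r ≤ #P) (hQr : #Q ≤ r) : False := by
  have hPS : #P < #S := by rw [h.card_eq]; have := hQ.card_pos; omega
  have hb : (0 : ℝ) < #(Q \ P) := by exact_mod_cast hQ.card_pos
  have hq : (#Q : ℝ) ≤ r := by exact_mod_cast hQr
  have hn : ρ * (#S - r / 2) = #(Q \ P) * ρ + ρ * (#P - r / 2) := by
    rw [h.card_eq]; push_cast; ring
  have hdeg : (#(Q \ P) : ℝ) * (#Q - 1) * c < #(Q \ P) * ρ := by
    calc (#(Q \ P) : ℝ) * (#Q - 1) * c ≤ #(Q \ P) * (c * (r - 1)) := by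
          rw [mul_assoc, mul_comm _ c]; gcongr
      _ < #(Q \ P) * ρ := by gcongr
  linarith [hS.1.2, h.wsum_le_mul_add_wsum hw hc0 hc, hS.wsum_le hPS hrP]

lemma IsHeavy.not_isSeparation_of_card_lt (hS : IsHeavy G w ρ r S) (hc0 : 0 ≤ c)
    (hc : ∀ e ∈ edgesIn G S, w e ≤ c) (hρ : c * (r - 1) < ρ) (h : IsSeparation G S P Q)
    (hP : (P \ Q).Nonempty) (hPr : #P < r) (hQr : #Q < r) : False := by
  have hnP : (#S : ℝ) = #(Q \ P) + #P := by exact_mod_cast h.card_eq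
  have hnQ : (#S : ℝ) = #(P \ Q) + #Q := by exact_mod_cast h.symm.card_eq
  have hPr' : (#P : ℝ) + 1 ≤ r := by exact_mod_cast hPr
  have hQr' : (#Q : ℝ) + 1 ≤ r := by exact_mod_cast hQr
  have hrS : (r : ℝ) ≤ #S := by exact_mod_cast hS.1
  have ha : (1 : ℝ) ≤ #(P \ Q) := by exact_mod_cast hP.card_pos
  have hab : ((#S : ℝ) - r + 1) ^ 2 ≤ #(P \ Q) * #(Q \ P) := by
    rw [sq]; exact mul_le_mul (by linarith) (by linarith) (by linarith) (by positivity)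
  have hW : 2 * wsum G w S ≤ (2 * #S - r) * (c * (r - 1)) := by
    calc 2 * wsum G w S ≤ (#S * (#S - 1) - 2 * #(P \ Q) * #(Q \ P)) * c :=
          h.two_mul_wsum_le hc0 hc
      _ ≤ (2 * #S - r) * (r - 1) * c := by gcongr; nlinarith
      _ = _ := by ring
  have hρW : (2 * #S - r) * (c * (r - 1)) < (2 * #S - r) * ρ := by
    gcongr
    linarith
  linarith [hS.2]

lemma IsMinHeavy.not_isSeparation (hS : IsMinHeavy G w ρ r S)
    (hw : ∀ e ∈ G.edgeSet, 0 ≤ w e) (hc0 : 0 ≤ c) (hc : ∀ e ∈ edgesIn G S, w e ≤ c)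
    (hr : 0 < r) (hρ : c * (r - 1) < ρ)
    (h : IsSeparation G S P Q) (hk : 2 * #(P ∩ Q) ≤ r) (hP : (P \ Q).Nonempty)
    (hQ : (Q \ P).Nonempty) : False := by
  have hρ0 : 0 ≤ ρ := by
    have : (1 : ℝ) ≤ r := by exact_mod_cast hr
    nlinarith
  rcases le_or_gt r #P with hrP | hPr <;> rcases le_or_gt r #Q with hrQ | hQr
  · exact hS.not_isSeparation_of_le_card hw hρ0 h hk hP hQ hrP hrQ
  · exact hS.not_isSeparation_of_le_card_of_card_le hw hc0 hc hρ h hQ hrP hQr.le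
  · exact hS.not_isSeparation_of_le_card_of_card_le hw hc0 hc hρ h.symm hP hrQ hPr.le
  · exact hS.1.not_isSeparation_of_card_lt hc0 hc hρ h hP hPr hQr

theorem IsMinHeavy.vertexConnected (hS : IsMinHeavy G w ρ r S)
    (hw : ∀ e ∈ G.edgeSet, 0 ≤ w e) (hc0 : 0 ≤ c) (hc : ∀ e ∈ edgesIn G S, w e ≤ c)
    (hr : 0 < r) (hρ : c * (r - 1) < ρ) :
    VertexConnected G S (r / 2 + 1) := by
  have hrS := hS.1.succ_le_card hc0 hc hρ
  refine ⟨by omega, fun D hDS hD => ?_⟩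
  by_contra hdis
  have hne : (S \ D).Nonempty := by
    rw [← card_pos, card_sdiff_of_subset hDS]
    omega
  obtain ⟨P, Q, hsep, hPQ, hP, hQ⟩ := exists_isSeparation_of_not_connected hDS hne hdis
  exact hS.not_isSeparation hw hc0 hc hr hρ hsep (by rw [hPQ]; omega) hP hQ

end Heavy

/-- If `d(V) ≥ d > 0`, `r = ⌈d/wmax⌉`, and `S` is a minimum-cardinality subset among those
satisfying `|S| ≥ r` and `w(S) > d(V)·(|S| - r/2)`, then `G[S]` is
`(⌊r/2⌋+1)`-vertex-connected. -/
theorem minimal_subset_vertex_connected (G : SimpleGraph V) (w : Sym2 V → ℝ)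
    (hE : (edgesIn G Finset.univ).Nonempty)
    (hw : ∀ e ∈ G.edgeSet, 0 < w e)
    (d : ℝ) (hd : 0 < d)
    (hdens : density G w Finset.univ ≥ d)
    (S : Finset V)
    (hScard : ⌈d / (edgesIn G Finset.univ).sup' hE w⌉₊ ≤ S.card)
    (hSw : density G w Finset.univ *
        ((S.card : ℝ) - (⌈d / (edgesIn G Finset.univ).sup' hE w⌉₊ : ℝ) / 2) < wsum G w S)
    (hSmin : ∀ T : Finset V,
      ⌈d / (edgesIn G Finset.univ).sup' hE w⌉₊ ≤ T.card →
      density G w Finset.univ *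
          ((T.card : ℝ) - (⌈d / (edgesIn G Finset.univ).sup' hE w⌉₊ : ℝ) / 2) < wsum G w T →
      S.card ≤ T.card) :
    VertexConnected G S (⌈d / (edgesIn G Finset.univ).sup' hE w⌉₊ / 2 + 1) := by
  obtain ⟨e, he⟩ := id hE
  have hmax : 0 < (edgesIn G univ).sup' hE w :=
    (hw e (mem_edgesIn.1 he).1).trans_le (le_sup' w he)
  exact IsMinHeavy.vertexConnected ⟨⟨hScard, hSw⟩, fun T hT => hSmin T hT.1 hT.2⟩
    (fun e he => (hw e he).le) hmax.le (fun e he => le_sup' w (edgesIn_mono (subset_univ S) he))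
    (Nat.ceil_pos.2 (div_pos hd hmax)) ((mul_natCeil_div_sub_one_lt hmax hd.le).trans_le hdens)
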